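/- arXiv:1809.00470 — 3 statements merged into one kernel-verified Lean document; each statement's English description precedes it below -/
import Mathlib

section
/- Let A₀ be a unital complex *-algebra, H a complex Hilbert space, π : A₀ → B(H) a unital star-algebra homomorphism into the bounded linear operators on H, ξ ∈ H, and δ : A₀ → A₀ a qu*-derivation. Assume that ⟨π(δ(x))ξ, ξ⟩ = 0 for every x ∈ A₀. Then for all x, y ∈ A₀ one has ⟨π(δ(x))ξ, π(y)ξ⟩ = −⟨π(x)ξ, π(δ(y))ξ⟩. -/
theorem StarAlgHom.inner_map_star_mul_apply_self {𝕜 A H : Type*} [RCLike 𝕜] [Semiring A]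
    [StarRing A] [Algebra 𝕜 A] [NormedAddCommGroup H] [InnerProductSpace 𝕜 H] [CompleteSpace H]
    (π : A →⋆ₐ[𝕜] (H →L[𝕜] H)) (a b : A) (ξ : H) :
    inner 𝕜 (π (star a * b) ξ) ξ = inner 𝕜 (π b ξ) (π a ξ) := by
  rw [map_mul, map_star, mul_apply_eq_comp, ContinuousLinearMap.star_eq_adjoint,
    ContinuousLinearMap.adjoint_inner_left]

theorem stmt0_general (A : Type*) [Ring A] [StarRing A] [Algebra ℂ A]
    (H : Type*) [NormedAddCommGroup H] [InnerProductSpace ℂ H] [CompleteSpace H]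
    (π : A →⋆ₐ[ℂ] (H →L[ℂ] H)) (ξ : H)
    (δ : A →ₗ[ℂ] A)
    (hδstar : ∀ x : A, δ (star x) = star (δ x))
    (hδmul : ∀ x y : A, δ (x * y) = δ x * y + x * δ y)
    (hω : ∀ x : A, (inner ℂ (π (δ x) ξ) ξ : ℂ) = 0) :
    ∀ x y : A, (inner ℂ (π (δ x) ξ) (π y ξ) : ℂ) = -(inner ℂ (π x ξ) (π (δ y) ξ) : ℂ) := by
  intro x y
  have h := hω (star y * x)
  rw [hδmul, hδstar, map_add, add_apply, inner_add_left,
    π.inner_map_star_mul_apply_self, π.inner_map_star_mul_apply_self] at h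
  linear_combination h

/-- Let `A₀` be a unital complex *-algebra, `H` a complex Hilbert space,
`π : A₀ → B(H)` a unital star-algebra homomorphism, `ξ ∈ H`, and `δ : A₀ → A₀` a
qu*-derivation (a linear map with `δ(x*) = δ(x)*` and `δ(xy) = δ(x)y + xδ(y)`).
If `⟨π(δ(x))ξ, ξ⟩ = 0` for every `x`, then
`⟨π(δ(x))ξ, π(y)ξ⟩ = −⟨π(x)ξ, π(δ(y))ξ⟩` for all `x, y`. -/
theorem stmt0 (A : Type*) [Ring A] [StarRing A] [Algebra ℂ A] [StarModule ℂ A]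
    (H : Type*) [NormedAddCommGroup H] [InnerProductSpace ℂ H] [CompleteSpace H]
    (π : A →⋆ₐ[ℂ] (H →L[ℂ] H)) (ξ : H)
    (δ : A →ₗ[ℂ] A)
    (hδstar : ∀ x : A, δ (star x) = star (δ x))
    (hδmul : ∀ x y : A, δ (x * y) = δ x * y + x * δ y)
    (hω : ∀ x : A, (inner ℂ (π (δ x) ξ) ξ : ℂ) = 0) :
    ∀ x y : A, (inner ℂ (π (δ x) ξ) (π y ξ) : ℂ) = -(inner ℂ (π x ξ) (π (δ y) ξ) : ℂ) :=
  stmt0_general A H π ξ δ hδstar hδmul hω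
end

section
/- Let A₀ be a unital complex *-algebra, H a complex Hilbert space, π : A₀ → B(H) a unital star-algebra homomorphism, ξ ∈ H a cyclic vector for π (i.e., the linear span of {π(y)ξ : y ∈ A₀} is dense in H), and δ : A₀ → A₀ a qu*-derivation with ⟨π(δ(x))ξ, ξ⟩ = 0 for every x ∈ A₀. Then for every x ∈ A₀ with π(x)ξ = 0 one has π(δ(x))ξ = 0; in other words, the assignment π(x)ξ ↦ i·π(δ(x))ξ is a well-defined linear map on the dense subspace π(A₀)ξ. -/
/-! The vector `v = π(δ x)ξ` is orthogonal to every `π(y)ξ`: moving `π(y)` across the inner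
product and applying the Leibniz rule to `y* x` gives
`⟪π(y)ξ, v⟫ = ⟪ξ, π(δ(y* x))ξ⟫ - ⟪ξ, π(δ(y*))π(x)ξ⟫`, where the first term vanishes by
hypothesis and the second because `π(x)ξ = 0`. Cyclicity of `ξ` then forces `v = 0`. -/

open Submodule in
theorem Dense.eq_zero_of_inner_span_right {𝕜 E : Type*} [RCLike 𝕜] [NormedAddCommGroup E]
    [InnerProductSpace 𝕜 E] {S : Set E} {x : E} (hS : Dense (span 𝕜 S : Set E))
    (h : ∀ v ∈ S, inner 𝕜 v x = 0) : x = 0 := by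
  have hspan : span 𝕜 S ≤ (𝕜 ∙ x)ᗮ :=
    span_le.2 fun v hv => mem_orthogonal_singleton_iff_inner_left.2 (h v hv)
  exact hS.eq_zero_of_inner_right 𝕜 fun v hv =>
    mem_orthogonal_singleton_iff_inner_left.1 (hspan hv)

namespace StarAlgHom

variable {𝕜 A H : Type*} [RCLike 𝕜] [Semiring A] [Algebra 𝕜 A] [Star A]
  [NormedAddCommGroup H] [InnerProductSpace 𝕜 H] [CompleteSpace H]
  (π : A →⋆ₐ[𝕜] (H →L[𝕜] H))

theorem inner_apply_left (y : A) (ξ η : H) :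
    inner 𝕜 (π y ξ) η = inner 𝕜 ξ (π (star y) η) := by
  rw [map_star, ContinuousLinearMap.star_eq_adjoint, ContinuousLinearMap.adjoint_inner_right]

theorem inner_apply_apply_derivation_eq_zero {δ : A → A}
    (hδ : ∀ x y : A, δ (x * y) = δ x * y + x * δ y) {ξ : H}
    (hω : ∀ z : A, inner 𝕜 (π (δ z) ξ) ξ = 0) {x : A} (hx : π x ξ = 0) (y : A) :
    inner 𝕜 (π y ξ) (π (δ x) ξ) = 0 := calc
  inner 𝕜 (π y ξ) (π (δ x) ξ) = inner 𝕜 ξ (π (star y) (π (δ x) ξ)) := π.inner_apply_left _ _ _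
  _ = inner 𝕜 ξ (π (δ (star y * x)) ξ) := by
    rw [hδ, map_add, map_mul, map_mul, add_apply, mul_apply_eq_comp, mul_apply_eq_comp, hx,
      map_zero, zero_add]
  _ = 0 := inner_eq_zero_symm.1 (hω _)

end StarAlgHom

theorem stmt1_general (A : Type*) [Ring A] [StarRing A] [Algebra ℂ A]
    (H : Type*) [NormedAddCommGroup H] [InnerProductSpace ℂ H] [CompleteSpace H]
    (π : A →⋆ₐ[ℂ] (H →L[ℂ] H)) (ξ : H)
    (hcyc : Dense ((Submodule.span ℂ (Set.range fun y : A => π y ξ) : Submodule ℂ H) : Set H))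
    (δ : A →ₗ[ℂ] A)
    (hδmul : ∀ x y : A, δ (x * y) = δ x * y + x * δ y)
    (hω : ∀ x : A, (inner ℂ (π (δ x) ξ) ξ : ℂ) = 0) :
    ∀ x : A, π x ξ = 0 → π (δ x) ξ = 0 := by
  intro x hx
  refine hcyc.eq_zero_of_inner_span_right ?_
  rintro _ ⟨y, rfl⟩
  exact π.inner_apply_apply_derivation_eq_zero hδmul hω hx y

/-- Let `A₀` be a unital complex *-algebra, `H` a complex Hilbert space,
`π : A₀ → B(H)` a unital star-algebra homomorphism, `ξ` a cyclic vector for `π`, and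
`δ : A₀ → A₀` a qu*-derivation with `⟨π(δ(x))ξ, ξ⟩ = 0` for every `x`.  Then for every
`x` with `π(x)ξ = 0` one has `π(δ(x))ξ = 0`, i.e. `π(x)ξ ↦ i·π(δ(x))ξ` is well defined
on the dense subspace `π(A₀)ξ`. -/
theorem stmt1 (A : Type*) [Ring A] [StarRing A] [Algebra ℂ A] [StarModule ℂ A]
    (H : Type*) [NormedAddCommGroup H] [InnerProductSpace ℂ H] [CompleteSpace H]
    (π : A →⋆ₐ[ℂ] (H →L[ℂ] H)) (ξ : H)
    (hcyc : Dense ((Submodule.span ℂ (Set.range fun y : A => π y ξ) : Submodule ℂ H) : Set H))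
    (δ : A →ₗ[ℂ] A)
    (hδstar : ∀ x : A, δ (star x) = star (δ x))
    (hδmul : ∀ x y : A, δ (x * y) = δ x * y + x * δ y)
    (hω : ∀ x : A, (inner ℂ (π (δ x) ξ) ξ : ℂ) = 0) :
    ∀ x : A, π x ξ = 0 → π (δ x) ξ = 0 :=
  stmt1_general A H π ξ hcyc δ hδmul hω
end

section
/- Let A₀ be a unital complex *-algebra, H a complex Hilbert space, π : A₀ → B(H) a unital star-algebra homomorphism, ξ ∈ H a cyclic vector for π (the linear span D = span{π(y)ξ : y ∈ A₀} is dense in H), and δ : A₀ → A₀ a qu*-derivation with ⟨π(δ(x))ξ, ξ⟩ = 0 for every x ∈ A₀. Then there exists a densely defined linear operator T with domain D such that: (a) T(π(x)ξ) = i·π(δ(x))ξ for every x ∈ A₀; (b) T is symmetric, i.e. ⟨Tu, v⟩ = ⟨u, Tv⟩ for all u, v ∈ D; and (c) for every x ∈ A₀ and every v ∈ D, the vector π(x)v lies in D and π(δ(x))v = −i·(T(π(x)v) − π(x)(Tv)), i.e. π(δ(x)) = −i[T, π(x)] on D. -/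
/-!
The vector functional `a ↦ ⟪π a ξ, ξ⟫` kills `δ(A)`, so the Leibniz rule and `δ ∘ star = star ∘ δ`
make `⟪π (δ x) ξ, π y ξ⟫ = -⟪π x ξ, π (δ y) ξ⟫`. With `ξ` cyclic this shows that `π x ξ = 0`
forces `π (δ x) ξ = 0`, so `T (π x ξ) := i • π (δ x) ξ` is well defined on `D = π(A) ξ`; the same
identity makes `T` symmetric, and the Leibniz rule gives the commutator formula.
-/

open Submodule

namespace LinearMap

variable {R M N P : Type*} [Ring R] [AddCommGroup M] [Module R M] [AddCommGroup N] [Module R N]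
  [AddCommGroup P] [Module R P]

theorem span_range_eq_range (e : M →ₗ[R] N) : span R (Set.range e) = range e := by
  rw [← coe_range, span_eq]

theorem exists_span_range_apply_eq (e : M →ₗ[R] N) (L : M →ₗ[R] P) (h : ker e ≤ ker L) :
    ∃ T : span R (Set.range e) →ₗ[R] P, ∀ x, T ⟨e x, subset_span ⟨x, rfl⟩⟩ = L x :=
  ⟨(ker e).liftQ L h ∘ₗ e.quotKerEquivRange.symm.toLinearMap ∘ₗ
      (LinearEquiv.ofEq _ _ e.span_range_eq_range).toLinearMap,
    fun x => by
      change (ker e).liftQ L h (e.quotKerEquivRange.symm ⟨e x, mem_range_self e x⟩) = L x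
      rw [quotKerEquivRange_symm_apply_image]
      rfl⟩

theorem exists_apply_eq_of_mem_span_range (e : M →ₗ[R] N) {v : N}
    (hv : v ∈ span R (Set.range e)) : ∃ x, e x = v := by
  rwa [span_range_eq_range] at hv

end LinearMap

section Representation

variable {𝕜 A H : Type*} [RCLike 𝕜] [Ring A] [StarRing A] [Algebra 𝕜 A]
  [NormedAddCommGroup H] [InnerProductSpace 𝕜 H] [CompleteSpace H]
  (π : A →⋆ₐ[𝕜] (H →L[𝕜] H)) (ξ : H)

noncomputable def StarAlgHom.orbit : A →ₗ[𝕜] H where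
  toFun a := π a ξ
  map_add' a b := by simp
  map_smul' c a := by simp

variable {ξ}

theorem StarAlgHom.inner_apply_left_s2 (a : A) (u v : H) :
    inner 𝕜 (π a u) v = inner 𝕜 u (π (star a) v) := by
  rw [map_star, ContinuousLinearMap.star_eq_adjoint, ContinuousLinearMap.adjoint_inner_right]

theorem StarAlgHom.exists_apply_eq_of_mem_span {v : H}
    (hv : v ∈ span 𝕜 (Set.range fun y => π y ξ)) : ∃ y, π y ξ = v :=
  (π.orbit ξ).exists_apply_eq_of_mem_span_range hv

theorem StarAlgHom.apply_mem_span (x : A) {v : H} (hv : v ∈ span 𝕜 (Set.range fun y => π y ξ)) :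
    π x v ∈ span 𝕜 (Set.range fun y => π y ξ) := by
  obtain ⟨y, rfl⟩ := π.exists_apply_eq_of_mem_span hv
  exact subset_span ⟨x * y, by simp⟩

variable {π} {δ : A →ₗ[𝕜] A}

theorem inner_apply_derivation_orbit_eq_neg (hδstar : ∀ x : A, δ (star x) = star (δ x))
    (hδmul : ∀ x y : A, δ (x * y) = δ x * y + x * δ y)
    (hω : ∀ x : A, inner 𝕜 (π (δ x) ξ) ξ = 0) (x y : A) :
    inner 𝕜 (π (δ x) ξ) (π y ξ) = -inner 𝕜 (π x ξ) (π (δ y) ξ) := by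
  have hleibniz : star y * δ x = δ (star y * x) - δ (star y) * x := by
    rw [hδmul]; abel
  have hstar : star (δ (star y)) = δ y := by rw [← hδstar, star_star]
  calc inner 𝕜 (π (δ x) ξ) (π y ξ)
      = inner 𝕜 (π (star y * δ x) ξ) ξ := by
        rw [← star_star y, ← π.inner_apply_left_s2, star_star, map_mul, mul_apply_eq_comp]
    _ = -inner 𝕜 (π (δ (star y) * x) ξ) ξ := by
        rw [hleibniz, map_sub, sub_apply, inner_sub_left, hω, zero_sub]
    _ = -inner 𝕜 (π x ξ) (π (δ y) ξ) := by
        rw [map_mul, mul_apply_eq_comp, π.inner_apply_left_s2, hstar]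

theorem apply_derivation_orbit_eq_zero (hδstar : ∀ x : A, δ (star x) = star (δ x))
    (hδmul : ∀ x y : A, δ (x * y) = δ x * y + x * δ y)
    (hω : ∀ x : A, inner 𝕜 (π (δ x) ξ) ξ = 0)
    (hcyc : Dense (span 𝕜 (Set.range fun y => π y ξ) : Set H))
    {x : A} (hx : π x ξ = 0) : π (δ x) ξ = 0 := by
  refine hcyc.eq_zero_of_inner_left 𝕜 fun v hv => ?_
  obtain ⟨y, rfl⟩ := π.exists_apply_eq_of_mem_span hv
  rw [inner_apply_derivation_orbit_eq_neg hδstar hδmul hω, hx, inner_zero_left, neg_zero]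

theorem exists_linearMap_span_orbit_apply_eq (hδstar : ∀ x : A, δ (star x) = star (δ x))
    (hδmul : ∀ x y : A, δ (x * y) = δ x * y + x * δ y)
    (hω : ∀ x : A, inner 𝕜 (π (δ x) ξ) ξ = 0)
    (hcyc : Dense (span 𝕜 (Set.range fun y => π y ξ) : Set H)) :
    ∃ T : span 𝕜 (Set.range fun y => π y ξ) →ₗ[𝕜] H,
      ∀ x, T ⟨π x ξ, subset_span ⟨x, rfl⟩⟩ = π (δ x) ξ :=
  (π.orbit ξ).exists_span_range_apply_eq (π.orbit ξ ∘ₗ δ) fun _ hx =>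
    apply_derivation_orbit_eq_zero hδstar hδmul hω hcyc hx

end Representation

theorem stmt2_general (A : Type*) [Ring A] [StarRing A] [Algebra ℂ A]
    (H : Type*) [NormedAddCommGroup H] [InnerProductSpace ℂ H] [CompleteSpace H]
    (π : A →⋆ₐ[ℂ] (H →L[ℂ] H)) (ξ : H)
    (hcyc : Dense ((Submodule.span ℂ (Set.range fun y : A => π y ξ) : Submodule ℂ H) : Set H))
    (δ : A →ₗ[ℂ] A)
    (hδstar : ∀ x : A, δ (star x) = star (δ x))
    (hδmul : ∀ x y : A, δ (x * y) = δ x * y + x * δ y)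
    (hω : ∀ x : A, (inner ℂ (π (δ x) ξ) ξ : ℂ) = 0) :
    ∃ T : (Submodule.span ℂ (Set.range fun y : A => π y ξ)) →ₗ[ℂ] H,
      (∀ x : A, T ⟨π x ξ, Submodule.subset_span ⟨x, rfl⟩⟩ = Complex.I • π (δ x) ξ) ∧
      (∀ u v : Submodule.span ℂ (Set.range fun y : A => π y ξ),
        (inner ℂ (T u) (v : H) : ℂ) = inner ℂ (u : H) (T v)) ∧
      ∃ hmem : ∀ (x : A) (v : Submodule.span ℂ (Set.range fun y : A => π y ξ)),
          π x (v : H) ∈ Submodule.span ℂ (Set.range fun y : A => π y ξ),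
        ∀ (x : A) (v : Submodule.span ℂ (Set.range fun y : A => π y ξ)),
          π (δ x) (v : H) = (-Complex.I) • (T ⟨π x (v : H), hmem x v⟩ - π x (T v)) := by
  obtain ⟨T, hT⟩ := exists_linearMap_span_orbit_apply_eq hδstar hδmul hω hcyc
  have hT' : ∀ (v : Submodule.span ℂ (Set.range fun y : A => π y ξ)) (y : A),
      (v : H) = π y ξ → (Complex.I • T) v = Complex.I • π (δ y) ξ := by
    rintro ⟨_, _⟩ y rfl
    rw [LinearMap.smul_apply, hT]
  refine ⟨Complex.I • T, fun x => hT' _ x rfl, fun u v => ?_,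
    fun x v => π.apply_mem_span x v.2, fun x v => ?_⟩
  · obtain ⟨x, hx⟩ := π.exists_apply_eq_of_mem_span u.2
    obtain ⟨y, hy⟩ := π.exists_apply_eq_of_mem_span v.2
    rw [hT' u x hx.symm, hT' v y hy.symm, ← hx, ← hy, inner_smul_left, inner_smul_right,
      inner_apply_derivation_orbit_eq_neg hδstar hδmul hω]
    simp
  · obtain ⟨y, hy⟩ := π.exists_apply_eq_of_mem_span v.2
    rw [hT' _ (x * y) (show π x v = π (x * y) ξ by rw [← hy, map_mul, mul_apply_eq_comp]),
      hT' v y hy.symm, ← hy, hδmul, map_add, map_mul, map_mul]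
    simp [smul_smul]

/-- In the setting of a unital star-representation `π : A₀ → B(H)` with
cyclic vector `ξ` and a qu*-derivation `δ` whose range is annihilated by the vector
functional `a ↦ ⟨π(a)ξ, ξ⟩`, there is a densely defined linear operator `T` on the dense
domain `D = span{π(y)ξ : y ∈ A₀}` such that `T(π(x)ξ) = i·π(δ(x))ξ`, `T` is symmetric,
and `π(δ(x)) = −i[T, π(x)]` on `D`. -/
theorem stmt2 (A : Type*) [Ring A] [StarRing A] [Algebra ℂ A] [StarModule ℂ A]
    (H : Type*) [NormedAddCommGroup H] [InnerProductSpace ℂ H] [CompleteSpace H]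
    (π : A →⋆ₐ[ℂ] (H →L[ℂ] H)) (ξ : H)
    (hcyc : Dense ((Submodule.span ℂ (Set.range fun y : A => π y ξ) : Submodule ℂ H) : Set H))
    (δ : A →ₗ[ℂ] A)
    (hδstar : ∀ x : A, δ (star x) = star (δ x))
    (hδmul : ∀ x y : A, δ (x * y) = δ x * y + x * δ y)
    (hω : ∀ x : A, (inner ℂ (π (δ x) ξ) ξ : ℂ) = 0) :
    ∃ T : (Submodule.span ℂ (Set.range fun y : A => π y ξ)) →ₗ[ℂ] H,
      (∀ x : A, T ⟨π x ξ, Submodule.subset_span ⟨x, rfl⟩⟩ = Complex.I • π (δ x) ξ) ∧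
      (∀ u v : Submodule.span ℂ (Set.range fun y : A => π y ξ),
        (inner ℂ (T u) (v : H) : ℂ) = inner ℂ (u : H) (T v)) ∧
      ∃ hmem : ∀ (x : A) (v : Submodule.span ℂ (Set.range fun y : A => π y ξ)),
          π x (v : H) ∈ Submodule.span ℂ (Set.range fun y : A => π y ξ),
        ∀ (x : A) (v : Submodule.span ℂ (Set.range fun y : A => π y ξ)),
          π (δ x) (v : H) = (-Complex.I) • (T ⟨π x (v : H), hmem x v⟩ - π x (T v)) :=
  stmt2_general A H π ξ hcyc δ hδstar hδmul hω
end
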